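/- Let A be an n×n zero-one matrix such that all entries of A^p are positive for some p ≥ 1, let P be a Markov matrix compatible with A, v a stationary probability vector for P, and μ_P the associated two-sided Markov measure on {1,…,n}^ℤ. Then the left shift σ is ergodic with respect to μ_P: every measurable set B ⊆ {1,…,n}^ℤ with σ^{−1}(B) = B satisfies μ_P(B) = 0 or μ_P(B) = 1. -/

import Mathlib

/-!
Since `A ^ p` is positive and `P` has the zero pattern of `A`, all entries of `P ^ p` are at
least some `δ > 0`. Summing the cylinder formula over the free coordinates in between gives
`μ (C ∩ σ⁻ᵏ C') ≥ δ μ C μ C'` for cylinders `C`, `C'` on windows that are `p` apart, hence for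
any two cylinder sets once `k` is large. If `B` is invariant and the cylinder set `E`
approximates `B`, then `E ∩ σ⁻ᵏ Eᶜ` has measure at most `μ (B ∆ E)` but at least
`δ μ E μ Eᶜ`, so `μ B * (1 - μ B)` is arbitrarily small, hence zero.
-/

open MeasureTheory Finset
open scoped ENNReal symmDiff

theorem exists_pos_forall_le_of_forall_pos {ι : Type*} [Finite ι] {f : ι → ℝ}
    (hf : ∀ i, 0 < f i) : ∃ δ > 0, ∀ i, δ ≤ f i := by
  rcases isEmpty_or_nonempty ι with hι | hι
  · exact ⟨1, one_pos, fun i => isEmptyElim i⟩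
  · obtain ⟨i₀, hi₀⟩ := Finite.exists_min f
    exact ⟨f i₀, hf i₀, hi₀⟩

theorem Matrix.pow_apply_pos_of_pos {ι R : Type*} [Fintype ι] [DecidableEq ι] [Semiring R]
    [LinearOrder R] [IsStrictOrderedRing R] {A P : Matrix ι ι R} (hA : ∀ i j, 0 ≤ A i j)
    (hP : ∀ i j, 0 ≤ P i j) (hAP : ∀ i j, 0 < A i j → 0 < P i j) (k : ℕ) (i j : ι)
    (h : 0 < (A ^ k) i j) : 0 < (P ^ k) i j := by
  induction k generalizing j with
  | zero => simpa using h
  | succ k ih =>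
    rw [pow_succ, mul_apply, sum_pos_iff_of_nonneg fun l _ =>
      mul_nonneg (pow_apply_nonneg hA k i l) (hA l j)] at h
    obtain ⟨l, -, hl⟩ := h
    rw [pow_succ, mul_apply]
    exact sum_pos' (fun m _ => mul_nonneg (pow_apply_nonneg hP k i m) (hP m j))
      ⟨l, mem_univ l, mul_pos (ih l (pos_of_mul_pos_left hl (hA l j)))
        (hAP l j (pos_of_mul_pos_right hl (pow_apply_nonneg hA k i l)))⟩

theorem MeasureTheory.mul_measure_preimage_le_measure_inter_of_fibres {X β γ : Type*}
    [MeasurableSpace X] {μ : Measure X} [Fintype β] [MeasurableSpace β]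
    [MeasurableSingletonClass β] [Fintype γ] [MeasurableSpace γ] [MeasurableSingletonClass γ]
    {f : X → β} {g : X → γ}
    (hf : Measurable f) (hg : Measurable g) {c : ℝ≥0∞}
    (h : ∀ x y, c * μ (f ⁻¹' {f x}) * μ (g ⁻¹' {g y}) ≤ μ (f ⁻¹' {f x} ∩ g ⁻¹' {g y}))
    (S : Set β) (T : Set γ) : c * μ (f ⁻¹' S) * μ (g ⁻¹' T) ≤ μ (f ⁻¹' S ∩ g ⁻¹' T) := by
  classical
  have hfibre : ∀ b b', c * μ (f ⁻¹' {b}) * μ (g ⁻¹' {b'}) ≤ μ (f ⁻¹' {b} ∩ g ⁻¹' {b'}) := by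
    intro b b'
    rcases (f ⁻¹' {b}).eq_empty_or_nonempty with hb | ⟨x, rfl⟩
    · simp [hb]
    rcases (g ⁻¹' {b'}).eq_empty_or_nonempty with hb' | ⟨y, rfl⟩
    · simp [hb']
    exact h x y
  have hpair : ∀ q : β × γ, (fun x => (f x, g x)) ⁻¹' {q} = f ⁻¹' {q.1} ∩ g ⁻¹' {q.2} :=
    fun q => by ext x; simp [Prod.ext_iff]
  rw [← Set.mk_preimage_prod, ← Set.coe_toFinset S, ← Set.coe_toFinset T, ← coe_product,
    ← sum_measure_preimage_singleton _ fun q _ => hf.prodMk hg (measurableSet_singleton q),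
    ← sum_measure_preimage_singleton _ fun b _ => hf (measurableSet_singleton b),
    ← sum_measure_preimage_singleton _ fun b _ => hg (measurableSet_singleton b), sum_product,
    mul_sum S.toFinset, sum_mul_sum]
  simp only [hpair]
  exact sum_le_sum fun b _ => sum_le_sum fun b' _ => hfibre b b'

theorem mul_one_sub_le_mul_one_sub_add {x y η : ℝ} (hx0 : 0 ≤ x) (hx1 : x ≤ 1) (hy0 : 0 ≤ y)
    (hy1 : y ≤ 1) (h : |x - y| ≤ η) : x * (1 - x) ≤ y * (1 - y) + η := by
  have h' : |1 - x - y| ≤ 1 := abs_le.2 ⟨by linarith, by linarith⟩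
  calc x * (1 - x) = y * (1 - y) + (x - y) * (1 - x - y) := by ring
    _ ≤ y * (1 - y) + |x - y| * |1 - x - y| := by rw [← abs_mul]; gcongr; exact le_abs_self _
    _ ≤ y * (1 - y) + η * 1 := by gcongr; exact (abs_nonneg _).trans h
    _ = y * (1 - y) + η := by rw [mul_one]

theorem MeasureTheory.MeasurePreserving.measure_inter_preimage_iterate_compl_le_measure_symmDiff
    {X : Type*} [MeasurableSpace X] {μ : Measure X} {T : X → X} (hT : MeasurePreserving T μ μ)
    {B E : Set X} (hB : MeasurableSet B) (hTB : T ⁻¹' B = B) (hE : MeasurableSet E) (k : ℕ) :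
    μ (E ∩ T^[k] ⁻¹' Eᶜ) ≤ μ (B ∆ E) := calc
  _ ≤ μ (E \ B ∪ T^[k] ⁻¹' (B \ E)) := by
    refine measure_mono fun x ⟨hxE, hxE'⟩ => ?_
    by_cases hxB : x ∈ B
    · have : x ∈ T^[k] ⁻¹' B := by rwa [Function.IsFixedPt.preimage_iterate hTB k]
      exact Or.inr ⟨this, hxE'⟩
    · exact Or.inl ⟨hxE, hxB⟩
  _ ≤ μ (E \ B) + μ (T^[k] ⁻¹' (B \ E)) := measure_union_le _ _
  _ = μ (B ∆ E) := by
    rw [(hT.iterate k).measure_preimage (hB.diff hE).nullMeasurableSet,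
      measure_symmDiff_eq hB.nullMeasurableSet hE.nullMeasurableSet, add_comm]

theorem Ergodic.of_mul_measure_le_measure_inter_preimage_iterate {X : Type*}
    [m : MeasurableSpace X] {μ : Measure X} [IsProbabilityMeasure μ] {T : X → X}
    (hT : MeasurePreserving T μ μ) {𝒜 : Set (Set X)} (h𝒜 : IsSetAlgebra 𝒜)
    (hgen : m = MeasurableSpace.generateFrom 𝒜) {c : ℝ} (hc : 0 < c)
    (hmix : ∀ E ∈ 𝒜, ∀ F ∈ 𝒜, ∃ k : ℕ, ENNReal.ofReal c * μ E * μ F ≤ μ (E ∩ T^[k] ⁻¹' F)) :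
    Ergodic T μ := by
  have hdense := Measure.MeasureDense.of_generateFrom_isSetAlgebra_finite μ h𝒜 hgen
  refine ⟨hT, ⟨fun B hB hTB => ?_⟩⟩
  have hsmall : ∀ ε > 0, c * μ.real B * μ.real Bᶜ ≤ (1 + c) * ε := by
    intro ε hε
    obtain ⟨E, hE𝒜, hBE⟩ := hdense.approx B hB (measure_ne_top μ B) ε hε
    obtain ⟨k, hk⟩ := hmix E hE𝒜 Eᶜ (h𝒜.compl_mem hE𝒜)
    have hE := hdense.measurable E hE𝒜
    have hEE : c * μ.real E * μ.real Eᶜ ≤ μ.real (B ∆ E) := by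
      simpa [Measure.real, ENNReal.toReal_mul, hc.le] using ENNReal.toReal_mono (measure_ne_top _ _)
        (hk.trans (hT.measure_inter_preimage_iterate_compl_le_measure_symmDiff hB hTB hE k))
    have hBE' : μ.real (B ∆ E) < ε := ENNReal.toReal_lt_of_lt_ofReal hBE
    have hBB := mul_one_sub_le_mul_one_sub_add measureReal_nonneg measureReal_le_one
      measureReal_nonneg measureReal_le_one
      (abs_measureReal_sub_le_measureReal_symmDiff hB.nullMeasurableSet hE.nullMeasurableSet
        (μ := μ))
    rw [measureReal_compl hE, probReal_univ] at hEE
    rw [measureReal_compl hB, probReal_univ]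
    nlinarith
  have hzero : μ.real B * μ.real Bᶜ = 0 := by
    refine le_antisymm (nonpos_of_mul_nonpos_right ?_ hc) (by positivity)
    refine le_of_forall_pos_le_add fun ε hε => ?_
    simpa [← mul_assoc, mul_div_cancel₀ _ (by positivity : (1 + c) ≠ 0)] using
      hsmall (ε / (1 + c)) (by positivity)
  rw [Filter.eventuallyConst_set', ae_eq_empty, ae_eq_univ, ← measureReal_eq_zero_iff,
    ← measureReal_eq_zero_iff]
  exact mul_eq_zero.1 hzero

section Shift

variable {α : Type*}

def leftShift (ω : ℤ → α) : ℤ → α := fun i => ω (i + 1)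

theorem leftShift_iterate_apply (k : ℕ) (ω : ℤ → α) (i : ℤ) :
    leftShift^[k] ω i = ω (i + k) := by
  induction k generalizing ω with
  | zero => simp
  | succ k ih =>
    rw [Function.iterate_succ_apply, ih, leftShift]
    push_cast
    ring_nf

theorem measurable_leftShift [MeasurableSpace α] : Measurable (leftShift : (ℤ → α) → ℤ → α) :=
  measurable_pi_lambda _ fun i => measurable_pi_apply (i + 1)

def cylinderIcc (a b : ℤ) (w : ℤ → α) : Set (ℤ → α) :=
  {ω | ∀ i, a ≤ i → i ≤ b → ω i = w i}

theorem restrict_preimage_singleton_restrict (a b : ℤ) (w : ℤ → α) :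
    (Icc a b).restrict ⁻¹' ({(Icc a b).restrict w} : Set (Icc a b → α)) = cylinderIcc a b w := by
  ext ω
  simp [cylinderIcc, funext_iff]

theorem measurableSet_cylinderIcc [MeasurableSpace α] [MeasurableSingletonClass α] (a b : ℤ)
    (w : ℤ → α) : MeasurableSet (cylinderIcc a b w) := by
  rw [← restrict_preimage_singleton_restrict]
  exact measurable_restrict _ (measurableSet_singleton _)

theorem cylinderIcc_inter_cylinderIcc_of_eq {a b d : ℤ} {u w : ℤ → α} (hab : a ≤ b)
    (hbd : b ≤ d) (hub : u b = w b) : cylinderIcc a b u ∩ cylinderIcc b d w =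
      cylinderIcc a d (fun i => if i ≤ b then u i else w i) := by
  ext ω
  simp only [cylinderIcc, Set.mem_inter_iff, Set.mem_ofPred_eq]
  refine ⟨fun ⟨hu, hw⟩ i hai hid => ?_, fun h => ⟨fun i hai hib => ?_, fun i hbi hid => ?_⟩⟩
  · split_ifs with hib
    exacts [hu i hai hib, hw i (by omega) hid]
  · simpa [hib] using h i hai (by omega)
  · rcases hbi.eq_or_lt with rfl | hbi
    · simpa [hub] using h b hab hid
    · simpa [hbi.not_ge] using h i (by omega) hid

theorem cylinderIcc_inter_cylinderIcc_of_ne {a b d : ℤ} {u w : ℤ → α} (hab : a ≤ b)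
    (hbd : b ≤ d) (hub : u b ≠ w b) : cylinderIcc a b u ∩ cylinderIcc b d w = ∅ :=
  Set.eq_empty_of_forall_notMem fun _ hω =>
    hub ((hω.1 b hab le_rfl).symm.trans (hω.2 b le_rfl hbd))

theorem cylinderIcc_eq_iUnion_update (a b : ℤ) (u : ℤ → α) :
    cylinderIcc a b u = ⋃ j, cylinderIcc a (b + 1) (Function.update u (b + 1) j) := by
  ext ω
  simp only [cylinderIcc, Set.mem_iUnion, Set.mem_ofPred_eq]
  refine ⟨fun hu => ⟨ω (b + 1), fun i hai hib => ?_⟩, fun ⟨j, hu⟩ i hai hib => ?_⟩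
  · rcases hib.eq_or_lt with rfl | hib
    · simp
    · rw [Function.update_of_ne (by omega)]
      exact hu i hai (by omega)
  · simpa [Function.update_of_ne (show i ≠ b + 1 by omega)] using hu i hai (by omega)

theorem pairwise_disjoint_cylinderIcc_update {a b : ℤ} (hab : a ≤ b) (u : ℤ → α) :
    Pairwise (Function.onFun Disjoint fun j => cylinderIcc a b (Function.update u b j)) :=
  fun _ _ hjj' => Set.disjoint_left.2 fun _ hj hj' =>
    hjj' (by simpa using (hj b hab le_rfl).symm.trans (hj' b hab le_rfl))

theorem preimage_leftShift_iterate_cylinderIcc (k : ℕ) (a b : ℤ) (w : ℤ → α) :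
    leftShift^[k] ⁻¹' cylinderIcc a b (leftShift^[k] w) = cylinderIcc (a + k) (b + k) w := by
  ext ω
  simp only [Set.mem_preimage, cylinderIcc, Set.mem_ofPred_eq, leftShift_iterate_apply]
  constructor
  · intro h i hai hib
    simpa using h (i - k) (by omega) (by omega)
  · intro h i hai hib
    exact h (i + k) (by omega) (by omega)

theorem exists_eq_cylinder_Icc [MeasurableSpace α] {t : Set (ℤ → α)}
    (ht : t ∈ measurableCylinders fun _ : ℤ => α) :
    ∃ (N : ℕ) (S : Set (Icc (-(N : ℤ)) N → α)), t = cylinder (Icc (-(N : ℤ)) N) S := by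
  obtain ⟨s, S, -, rfl⟩ := (mem_measurableCylinders t).1 ht
  let N : ℕ := s.sup Int.natAbs
  have hs : s ⊆ Icc (-(N : ℤ)) N := fun i hi => by
    have : i.natAbs ≤ N := le_sup (f := Int.natAbs) hi
    rw [mem_Icc]
    omega
  exact ⟨N, restrict₂ (π := fun _ => α) hs ⁻¹' S, rfl⟩

end Shift

section Markov

variable {α : Type*} (v : α → ℝ) (P : Matrix α α ℝ)

noncomputable def transitionProd (a b : ℤ) (w : ℤ → α) : ℝ :=
  ∏ i ∈ Ico a b, P (w i) (w (i + 1))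

def IsMarkovMeasure [MeasurableSpace α] (μ : Measure (ℤ → α)) : Prop :=
  ∀ a b, a ≤ b → ∀ w, μ (cylinderIcc a b w) = ENNReal.ofReal (v (w a) * transitionProd P a b w)

variable {P}

theorem transitionProd_nonneg (hP : ∀ i j, 0 ≤ P i j) (a b : ℤ) (w : ℤ → α) :
    0 ≤ transitionProd P a b w :=
  prod_nonneg fun _ _ => hP _ _

theorem transitionProd_congr {a b : ℤ} {u w : ℤ → α} (h : ∀ i, a ≤ i → i ≤ b → u i = w i) :
    transitionProd P a b u = transitionProd P a b w :=
  prod_congr rfl fun i hi => by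
    rw [mem_Ico] at hi
    rw [h i hi.1 hi.2.le, h (i + 1) (by omega) (by omega)]

theorem transitionProd_mul {a b c : ℤ} (hab : a ≤ b) (hbc : b ≤ c) (w : ℤ → α) :
    transitionProd P a b w * transitionProd P b c w = transitionProd P a c w := by
  rw [transitionProd, transitionProd, transitionProd, ← Ico_union_Ico_eq_Ico hab hbc,
    prod_union (Ico_disjoint_Ico_consecutive a b c)]

theorem transitionProd_succ {a b : ℤ} (hab : a ≤ b) (w : ℤ → α) :
    transitionProd P a (b + 1) w = transitionProd P a b w * P (w b) (w (b + 1)) := by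
  rw [← transitionProd_mul hab (Int.le_add_one le_rfl)]
  congr 1
  rw [transitionProd, Ico_add_one_right_eq_Icc, Icc_self, prod_singleton]

variable [Fintype α] [DecidableEq α] [MeasurableSpace α] [MeasurableSingletonClass α] {v}
  {μ : Measure (ℤ → α)}

theorem IsMarkovMeasure.measure_cylinderIcc_inter_cylinderIcc (hμ : IsMarkovMeasure v P μ)
    (hv : ∀ i, 0 ≤ v i) (hP : ∀ i j, 0 ≤ P i j) {a b d : ℤ} (u w : ℤ → α) (m : ℕ)
    (hab : a ≤ b) (hbd : b + m ≤ d) :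
    μ (cylinderIcc a b u ∩ cylinderIcc (b + m) d w) = ENNReal.ofReal
      (v (u a) * transitionProd P a b u * (P ^ m) (u b) (w (b + m)) *
        transitionProd P (b + m) d w) := by
  induction m generalizing b u with
  | zero =>
    simp only [Nat.cast_zero, add_zero, pow_zero, Matrix.one_apply] at hbd ⊢
    split_ifs with hub
    · rw [cylinderIcc_inter_cylinderIcc_of_eq hab hbd hub, hμ a d (hab.trans hbd),
        ← transitionProd_mul hab hbd, transitionProd_congr (w := u) fun i _ hib => if_pos hib,
        transitionProd_congr (a := b) (w := w) fun i hbi _ => ?_]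
      · simp [hab, mul_assoc]
      · rcases hbi.eq_or_lt with rfl | hbi
        · simp [hub]
        · simp [hbi.not_ge]
    · simp [cylinderIcc_inter_cylinderIcc_of_ne hab hbd hub]
  | succ m ih =>
    have hc : b + ((m + 1 : ℕ) : ℤ) = b + 1 + m := by push_cast; ring
    rw [hc] at hbd ⊢
    have hterm : ∀ j, μ (cylinderIcc a (b + 1) (Function.update u (b + 1) j) ∩
        cylinderIcc (b + 1 + m) d w) = ENNReal.ofReal (v (u a) * transitionProd P a b u *
          (P (u b) j * (P ^ m) j (w (b + 1 + m))) * transitionProd P (b + 1 + m) d w) := by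
      intro j
      rw [ih _ (by omega) hbd, transitionProd_succ hab,
        transitionProd_congr (w := u) fun i _ hib => Function.update_of_ne (by omega) _ _]
      simp only [Function.update_self, Function.update_of_ne (show a ≠ b + 1 by omega),
        Function.update_of_ne (show b ≠ b + 1 by omega)]
      ring_nf
    have hnonneg : ∀ j ∈ univ, 0 ≤ v (u a) * transitionProd P a b u *
        (P (u b) j * (P ^ m) j (w (b + 1 + m))) * transitionProd P (b + 1 + m) d w :=
      fun j _ => mul_nonneg (mul_nonneg (mul_nonneg (hv _) (transitionProd_nonneg hP _ _ _))
        (mul_nonneg (hP _ _) (Matrix.pow_apply_nonneg hP _ _ _))) (transitionProd_nonneg hP _ _ _)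
    rw [cylinderIcc_eq_iUnion_update a b u, Set.iUnion_inter,
      measure_iUnion (fun j j' hjj' => (pairwise_disjoint_cylinderIcc_update (by omega) u hjj').mono
        Set.inter_subset_left Set.inter_subset_left)
        fun j => (measurableSet_cylinderIcc _ _ _).inter (measurableSet_cylinderIcc _ _ _),
      tsum_fintype]
    simp only [hterm]
    rw [← ENNReal.ofReal_sum_of_nonneg hnonneg, ← sum_mul, ← mul_sum, pow_succ', Matrix.mul_apply]

theorem IsMarkovMeasure.mul_measure_le_measure_cylinderIcc_inter (hμ : IsMarkovMeasure v P μ)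
    (hv0 : ∀ i, 0 ≤ v i) (hv1 : ∀ i, v i ≤ 1) (hP : ∀ i j, 0 ≤ P i j) {δ : ℝ} (hδ : 0 ≤ δ)
    {m : ℕ} (hδm : ∀ i j, δ ≤ (P ^ m) i j) {a b c d : ℤ} (u w : ℤ → α) (hab : a ≤ b)
    (hc : c = b + m) (hcd : c ≤ d) :
    ENNReal.ofReal δ * μ (cylinderIcc a b u) * μ (cylinderIcc c d w) ≤
      μ (cylinderIcc a b u ∩ cylinderIcc c d w) := by
  subst hc
  have hx := mul_nonneg (hv0 (u a)) (transitionProd_nonneg hP a b u)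
  have hy := transitionProd_nonneg hP (b + m) d w
  rw [hμ a b hab u, hμ _ d hcd w, hμ.measure_cylinderIcc_inter_cylinderIcc hv0 hP u w m hab hcd,
    ← ENNReal.ofReal_mul hδ, ← ENNReal.ofReal_mul (mul_nonneg hδ hx)]
  refine ENNReal.ofReal_le_ofReal ?_
  calc δ * (v (u a) * transitionProd P a b u) * (v (w (b + m)) * transitionProd P (b + m) d w)
      = v (u a) * transitionProd P a b u * (δ * v (w (b + m))) * transitionProd P (b + m) d w := by
        ring
    _ ≤ v (u a) * transitionProd P a b u * (P ^ m) (u b) (w (b + m)) *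
        transitionProd P (b + m) d w := by
        gcongr
        exact (mul_le_of_le_one_right hδ (hv1 _)).trans (hδm _ _)

theorem IsMarkovMeasure.exists_mul_measure_le_measure_inter_preimage_iterate
    (hμ : IsMarkovMeasure v P μ) (hσ : MeasurePreserving leftShift μ μ) (hv0 : ∀ i, 0 ≤ v i)
    (hv1 : ∀ i, v i ≤ 1) (hP : ∀ i j, 0 ≤ P i j) {δ : ℝ} (hδ : 0 ≤ δ) {p : ℕ}
    (hδp : ∀ i j, δ ≤ (P ^ p) i j) {E F : Set (ℤ → α)}
    (hE : E ∈ measurableCylinders fun _ : ℤ => α) (hF : F ∈ measurableCylinders fun _ : ℤ => α) :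
    ∃ k : ℕ, ENNReal.ofReal δ * μ E * μ F ≤ μ (E ∩ leftShift^[k] ⁻¹' F) := by
  obtain ⟨N, S, rfl⟩ := exists_eq_cylinder_Icc hE
  obtain ⟨N', T, rfl⟩ := exists_eq_cylinder_Icc hF
  -- with this `k` the windows `[-N, N]` and `[k - N', k + N']` are exactly `p` apart
  refine ⟨N + p + N', ?_⟩
  rw [← (hσ.iterate _).measure_preimage
    (MeasurableSet.of_mem_measurableCylinders hF).nullMeasurableSet]
  refine mul_measure_preimage_le_measure_inter_of_fibres (measurable_restrict _)
    ((measurable_restrict _).comp (measurable_leftShift.iterate _)) (fun x y => ?_) S T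
  rw [restrict_preimage_singleton_restrict, Set.preimage_comp, Function.comp_apply,
    restrict_preimage_singleton_restrict, preimage_leftShift_iterate_cylinderIcc]
  exact hμ.mul_measure_le_measure_cylinderIcc_inter hv0 hv1 hP hδ hδp x y (by omega)
    (by push_cast; ring) (by omega)

end Markov

theorem stmt2_general (n : ℕ)
    (A P : Matrix (Fin n) (Fin n) ℝ)
    (hA : ∀ i j, A i j = 0 ∨ A i j = 1)
    (p : ℕ) (hAp : ∀ i j, 0 < (A ^ p) i j)
    (hPnonneg : ∀ i j, 0 ≤ P i j)
    (hPA : ∀ i j, 0 < P i j ↔ A i j = 1)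
    (v : Fin n → ℝ)
    (hvpos : ∀ i, 0 < v i)
    (hvsum : ∑ i, v i = 1)
    (μ : Measure (ℤ → Fin n)) (hprob : IsProbabilityMeasure μ)
    (hinv : ∀ s : Set (ℤ → Fin n), MeasurableSet s →
      μ ((fun ω (i : ℤ) => ω (i + 1)) ⁻¹' s) = μ s)
    (hcyl : ∀ n₂ n₁ : ℤ, n₂ ≤ n₁ → ∀ w : ℤ → Fin n,
      μ {ω | ∀ i : ℤ, n₂ ≤ i → i ≤ n₁ → ω i = w i} =
        ENNReal.ofReal (v (w n₂) * ∏ i ∈ Finset.Ico n₂ n₁, P (w i) (w (i + 1)))) :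
    ∀ B : Set (ℤ → Fin n), MeasurableSet B →
      (fun ω (i : ℤ) => ω (i + 1)) ⁻¹' B = B → μ B = 0 ∨ μ B = 1 := by
  have hσ : MeasurePreserving leftShift μ μ :=
    ⟨measurable_leftShift, Measure.ext fun s hs => by
      rw [Measure.map_apply measurable_leftShift hs]; exact hinv s hs⟩
  have hA0 : ∀ i j, 0 ≤ A i j := fun i j => by rcases hA i j with h | h <;> simp [h]
  have hAP : ∀ i j, 0 < A i j → 0 < P i j := fun i j h => (hPA i j).2 ((hA i j).resolve_left h.ne')
  obtain ⟨δ, hδ, hδp⟩ := exists_pos_forall_le_of_forall_pos fun q : Fin n × Fin n =>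
    Matrix.pow_apply_pos_of_pos hA0 hPnonneg hAP p q.1 q.2 (hAp q.1 q.2)
  have hv0 : ∀ i, 0 ≤ v i := fun i => (hvpos i).le
  have hv1 : ∀ i, v i ≤ 1 := fun i => hvsum ▸ single_le_sum (fun j _ => hv0 j) (mem_univ i)
  have hergodic : Ergodic leftShift μ :=
    Ergodic.of_mul_measure_le_measure_inter_preimage_iterate hσ isSetAlgebra_measurableCylinders
      generateFrom_measurableCylinders.symm hδ fun E hE F hF =>
        IsMarkovMeasure.exists_mul_measure_le_measure_inter_preimage_iterate hcyl hσ hv0 hv1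
          hPnonneg hδ.le (fun i j => hδp (i, j)) hE hF
  exact fun B hB hBinv => hergodic.prob_eq_zero_or_one hB hBinv

/-- if all entries of `A ^ p` are positive for some `p ≥ 1`, then the left
shift is ergodic with respect to the two-sided Markov measure `μ_P`. -/
theorem stmt2 (n : ℕ) (hn : 1 ≤ n)
    (A P : Matrix (Fin n) (Fin n) ℝ)
    (hA : ∀ i j, A i j = 0 ∨ A i j = 1)
    (p : ℕ) (hp : 1 ≤ p) (hAp : ∀ i j, 0 < (A ^ p) i j)
    (hPnonneg : ∀ i j, 0 ≤ P i j)
    (hProw : ∀ i, ∑ j, P i j = 1)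
    (hPA : ∀ i j, 0 < P i j ↔ A i j = 1)
    (v : Fin n → ℝ)
    (hvpos : ∀ i, 0 < v i)
    (hvsum : ∑ i, v i = 1)
    (hvstat : ∀ j, ∑ i, v i * P i j = v j)
    (μ : Measure (ℤ → Fin n)) (hprob : IsProbabilityMeasure μ)
    (hinv : ∀ s : Set (ℤ → Fin n), MeasurableSet s →
      μ ((fun ω (i : ℤ) => ω (i + 1)) ⁻¹' s) = μ s)
    (hcyl : ∀ n₂ n₁ : ℤ, n₂ ≤ n₁ → ∀ w : ℤ → Fin n,
      μ {ω | ∀ i : ℤ, n₂ ≤ i → i ≤ n₁ → ω i = w i} =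
        ENNReal.ofReal (v (w n₂) * ∏ i ∈ Finset.Ico n₂ n₁, P (w i) (w (i + 1)))) :
    ∀ B : Set (ℤ → Fin n), MeasurableSet B →
      (fun ω (i : ℤ) => ω (i + 1)) ⁻¹' B = B → μ B = 0 ∨ μ B = 1 :=
  stmt2_general n A P hA p hAp hPnonneg hPA v hvpos hvsum μ hprob hinv hcyl
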